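/- With b > 1/4, t_c = 1/2 + i√(b - 1/4), and R_λ(t) = Re(t²/2 - (2/3)(t-b)^{3/2} - (2/3) i b^{3/2}) (branch cut on positive real axis), the critical value satisfies R_λ(t_c) = b/2 - 1/12. -/

import Mathlib

/-! The critical point `t_c` is a root of `t² - t + b`, so `t_c - b = t_c²`. As `t_c` lies in the
upper half-plane, the branch chosen for the square root gives `(t_c - b)^{1/2} = t_c`, hence
`(t_c - b)^{3/2} = t_c³ = t_c - b - b t_c`. Then `F_λ(t_c) = (2b/3 - 1/6) t_c + b/6` up to the
term `-(2/3) i b^{3/2}`, which is purely imaginary, and `Re t_c = 1/2` gives `b/2 - 1/12`. -/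

open Complex

/-- Branch of the complex square root with argument in `[0, 2π)` (cut along the
positive real axis). -/
noncomputable def sqrtBr (z : ℂ) : ℂ :=
  (Real.sqrt ‖z‖ : ℂ) *
    Complex.exp (Complex.I * ((if 0 ≤ z.arg then z.arg else z.arg + 2 * Real.pi : ℝ) : ℂ) / 2)

/-- The `3/2`-power with the same branch cut. -/
noncomputable def pow32 (z : ℂ) : ℂ := (sqrtBr z) ^ 3

/-- `F_λ(t) = t²/2 - (2/3)(t-b)^{3/2} - (2/3) i b^{3/2}` and `R_λ = Re F_λ`. -/
noncomputable def Flam (b : ℝ) (t : ℂ) : ℂ :=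
  t ^ 2 / 2 - (2 / 3 : ℂ) * pow32 (t - (b : ℂ)) - (2 / 3 : ℂ) * Complex.I * pow32 ((b : ℂ))

open scoped Real

namespace Complex

lemma arg_sq_of_mem_Ioc {w : ℂ} (h : w.arg ∈ Set.Ioc (-(π / 2)) (π / 2)) :
    (w ^ 2).arg = 2 * w.arg := by
  rcases eq_or_ne w 0 with rfl | hw
  · simp
  rw [sq, arg_mul hw hw ⟨by linarith [h.1], by linarith [h.2]⟩]
  ring

lemma arg_sq_of_pi_div_two_lt_arg {w : ℂ} (him : 0 < w.im) (h : π / 2 < w.arg) :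
    (w ^ 2).arg = 2 * w.arg - 2 * π := by
  have hneg : (-w).arg = w.arg - π := arg_neg_eq_arg_sub_pi_of_im_pos him
  rw [← neg_sq, arg_sq_of_mem_Ioc ⟨by linarith, by linarith [arg_le_pi w]⟩, hneg]
  ring

end Complex

lemma sqrtBr_sq {w : ℂ} (h₀ : 0 ≤ w.arg) (h₁ : w.arg < π) : sqrtBr (w ^ 2) = w := by
  have hθ : (if 0 ≤ (w ^ 2).arg then (w ^ 2).arg else (w ^ 2).arg + 2 * π) = 2 * w.arg := by
    rcases le_or_gt w.arg (π / 2) with h | h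
    · rw [arg_sq_of_mem_Ioc ⟨by linarith [Real.pi_pos], h⟩, if_pos (by linarith)]
    · have hre : w.re < 0 := by
        by_contra! hre
        linarith [le_of_abs_le (abs_arg_le_pi_div_two_iff.2 hre)]
      have him : 0 < w.im :=
        lt_of_le_of_ne (arg_nonneg_iff.1 h₀)
          ((arg_lt_pi_iff.1 h₁).resolve_left hre.not_ge).symm
      rw [arg_sq_of_pi_div_two_lt_arg him h, if_neg (by linarith)]
      ring
  rw [sqrtBr, hθ, norm_pow, Real.sqrt_sq (norm_nonneg w)]
  convert norm_mul_exp_arg_mul_I w using 3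
  push_cast
  ring

lemma sqrtBr_ofReal {r : ℝ} (hr : 0 ≤ r) : sqrtBr r = √r := by
  have harg : arg (√r : ℂ) = 0 := arg_ofReal_of_nonneg (Real.sqrt_nonneg r)
  have h := sqrtBr_sq (w := (√r : ℂ)) harg.ge (harg ▸ Real.pi_pos)
  rwa [← ofReal_pow, Real.sq_sqrt hr] at h

lemma re_I_mul_pow32_ofReal {r : ℝ} (hr : 0 ≤ r) : (I * pow32 r).re = 0 := by
  rw [pow32, sqrtBr_ofReal hr, ← ofReal_pow, I_mul_re, ofReal_im, neg_zero]

lemma re_Flam_of_sq_eq {b : ℝ} (hb : 0 ≤ b) {w : ℂ} (hw : w ^ 2 = w - b)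
    (h₀ : 0 ≤ w.arg) (h₁ : w.arg < π) :
    (Flam b w).re = (2 * b / 3 - 1 / 6) * w.re + b / 6 := by
  have hpow : pow32 (w - b) = w ^ 3 := by rw [pow32, ← hw, sqrtBr_sq h₀ h₁]
  have hF : Flam b w = (2 * b / 3 - 1 / 6) * w + b / 6 - 2 / 3 * (I * pow32 b) := by
    rw [Flam, hpow]
    linear_combination (-1 / 6 - 2 / 3 * w) * hw
  rw [hF, sub_re, mul_re, re_I_mul_pow32_ofReal hb]
  simp

/-- The critical value: `R_λ(t_c) = b/2 - 1/12` at `t_c = 1/2 + i√(b - 1/4)`. -/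
theorem critical_value_of_relief (b : ℝ) (hb : b > 1 / 4) :
    (Flam b (1 / 2 + Complex.I * (Real.sqrt (b - 1 / 4) : ℂ))).re = b / 2 - 1 / 12 := by
  set t : ℂ := 1 / 2 + I * (Real.sqrt (b - 1 / 4) : ℂ)
  have hre : t.re = 1 / 2 := by simp [t]
  have him : 0 < t.im := by simpa [t] using hb
  have hsq : t ^ 2 = t - b := by
    have hs : (Real.sqrt (b - 1 / 4) : ℂ) ^ 2 = b - 1 / 4 := by
      rw [← ofReal_pow, Real.sq_sqrt (by linarith)]
      push_cast
      ring
    linear_combination (-1 : ℂ) * hs + (Real.sqrt (b - 1 / 4) : ℂ) ^ 2 * I_sq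
  rw [re_Flam_of_sq_eq (by linarith) hsq (arg_nonneg_iff.2 him.le)
    (arg_lt_pi_iff.2 (Or.inr him.ne')), hre]
  ring
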